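/- arXiv:math/0612848 — 2 statements merged into one kernel-verified Lean document; each statement's English description precedes it below -/
import Mathlib

section
/- Let Δ be a simplicial complex with Stanley-Reisner ideal I ⊂ S, and let P: Δ = ⋃_{i=1}^r [F_i, G_i] be a partition of Δ into intervals. Then I^c = ⊕_{i=1}^r x_{F_i} K[Z_{G_i}] is a squarefree Stanley decomposition of S/I. -/
/-- Monomials of the Stanley space `u K[Z]`. -/
def stanleySet {n : ℕ} (u : Fin n →₀ ℕ) (Z : Finset (Fin n)) : Set (Fin n →₀ ℕ) :=
  {a | ∃ v : Fin n →₀ ℕ, (v.support : Set (Fin n)) ⊆ (Z : Set (Fin n)) ∧ a = u + v}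

/-- The squarefree monomial `x_F`. -/
noncomputable def sqInd {n : ℕ} (F : Finset (Fin n)) : Fin n →₀ ℕ :=
  Finsupp.indicator F (fun _ _ => 1)

/-- The `K`-subspace of `S` spanned by the monomials with exponent vectors in `A`. -/
noncomputable def spanOf (K : Type*) [Field K] (n : ℕ) (A : Set (Fin n →₀ ℕ)) :
    Submodule K (MvPolynomial (Fin n) K) :=
  Submodule.span K ((fun a => MvPolynomial.monomial a (1 : K)) '' A)

lemma sqInd_apply {n : ℕ} (F : Finset (Fin n)) (i : Fin n) :
    sqInd F i = if i ∈ F then 1 else 0 := by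
  simp [sqInd, Finsupp.indicator_apply]

lemma mem_stanleySet {n : ℕ} {F Z : Finset (Fin n)} (hFZ : F ⊆ Z) (a : Fin n →₀ ℕ) :
    a ∈ stanleySet (sqInd F) Z ↔ F ⊆ a.support ∧ a.support ⊆ Z := by
  constructor
  · rintro ⟨v, hv, rfl⟩
    constructor
    · intro i hi
      simp only [Finsupp.mem_support_iff, Finsupp.add_apply, sqInd_apply, hi, if_pos]
      omega
    · intro i hi
      simp only [Finsupp.mem_support_iff, Finsupp.add_apply, sqInd_apply] at hi
      by_cases hiF : i ∈ F
      · exact hFZ hiF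
      · simp only [hiF, if_neg, not_false_iff, zero_add] at hi
        have : i ∈ v.support := Finsupp.mem_support_iff.mpr (by simpa using hi)
        exact hv this
  · rintro ⟨h1, h2⟩
    refine ⟨a - sqInd F, ?_, ?_⟩
    · intro i hi
      simp only [Finset.mem_coe, Finsupp.mem_support_iff, Finsupp.tsub_apply] at hi
      have : a i ≠ 0 := by intro h; simp [h] at hi
      exact h2 (Finsupp.mem_support_iff.mpr this)
    · ext i
      simp only [Finsupp.add_apply, Finsupp.tsub_apply, sqInd_apply]
      by_cases hiF : i ∈ F
      · have : a i ≠ 0 := Finsupp.mem_support_iff.mp (h1 hiF)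
        simp only [hiF, if_pos]
        omega
      · simp [hiF]

/-- a partition `Δ = ⋃ᵢ [Fᵢ,Gᵢ]` of a simplicial complex `Δ` into
intervals yields the squarefree Stanley decomposition
`I_Δ^c = ⊕ᵢ x_{Fᵢ} K[Z_{Gᵢ}]` of `S/I_Δ`. -/
theorem partition_gives_squarefree_stanley_decomposition
    {K : Type*} [Field K] {n r : ℕ} (Δ : Set (Finset (Fin n)))
    (hΔ : ∀ F ∈ Δ, ∀ G : Finset (Fin n), G ⊆ F → G ∈ Δ)
    (F G : Fin r → Finset (Fin n))
    (hFG : ∀ i, F i ⊆ G i) (hGΔ : ∀ i, G i ∈ Δ)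
    (hpart : ∀ H : Finset (Fin n), H ∈ Δ ↔ ∃! i, F i ⊆ H ∧ H ⊆ G i) :
    ((⨆ i, spanOf K n (stanleySet (sqInd (F i)) (G i))) =
        spanOf K n {a | a.support ∉ Δ}ᶜ) ∧
      iSupIndep fun i => spanOf K n (stanleySet (sqInd (F i)) (G i)) := by
  -- characterize the Stanley sets
  have hchar : ∀ i, stanleySet (sqInd (F i)) (G i) =
      {a : Fin n →₀ ℕ | F i ⊆ a.support ∧ a.support ⊆ G i} := by
    intro i; ext a; exact mem_stanleySet (hFG i) a
  -- pairwise disjointness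
  have hdisj : ∀ i j, i ≠ j →
      Disjoint (stanleySet (sqInd (F i)) (G i)) (stanleySet (sqInd (F j)) (G j)) := by
    intro i j hij
    rw [hchar i, hchar j, Set.disjoint_left]
    rintro a ⟨h1, h2⟩ ⟨h3, h4⟩
    have hmem : a.support ∈ Δ := (hpart a.support).mpr
      ⟨i, ⟨h1, h2⟩, fun k hk => by
        obtain ⟨m, hm, hu⟩ := (hpart a.support).mp ((hpart a.support).mpr
          ⟨i, ⟨h1, h2⟩, fun k hk => by
            obtain h := hk
            exact (((hpart a.support).mp ((hΔ _ (hGΔ i) _ h2))).unique hk ⟨h1, h2⟩)⟩)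
        exact (hu k hk).trans (hu i ⟨h1, h2⟩).symm⟩
    obtain ⟨m, hm, hu⟩ := (hpart a.support).mp hmem
    exact hij ((hu i ⟨h1, h2⟩).trans (hu j ⟨h3, h4⟩).symm)
  -- union
  have hunion : (⋃ i, stanleySet (sqInd (F i)) (G i)) = {a : Fin n →₀ ℕ | a.support ∉ Δ}ᶜ := by
    ext a
    simp only [Set.mem_iUnion, Set.mem_compl_iff, Set.mem_setOf_eq, not_not]
    constructor
    · rintro ⟨i, hi⟩
      rw [hchar i] at hi
      exact hΔ _ (hGΔ i) _ hi.2
    · intro h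
      obtain ⟨i, hi, -⟩ := (hpart a.support).mp h
      exact ⟨i, (hchar i).symm ▸ hi⟩
  -- translate spans via the monomial basis
  have hb : LinearIndependent K (fun a : Fin n →₀ ℕ => MvPolynomial.monomial a (1 : K)) := by
    have := (MvPolynomial.basisMonomials (Fin n) K).linearIndependent
    rwa [MvPolynomial.coe_basisMonomials] at this
  constructor
  · rw [← hunion, spanOf, Set.image_iUnion, Submodule.span_iUnion]
    rfl
  · intro i
    rw [iSup_subtype']
    have : (⨆ j : {j : Fin r // j ≠ i}, spanOf K n (stanleySet (sqInd (F j)) (G j))) =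
        Submodule.span K ((fun a => MvPolynomial.monomial a (1 : K)) ''
          (⋃ j : {j : Fin r // j ≠ i}, stanleySet (sqInd (F j)) (G j))) := by
      rw [Set.image_iUnion, Submodule.span_iUnion]; rfl
    rw [this]
    apply hb.disjoint_span_image
    rw [Set.disjoint_left]
    rintro a ha hmem
    rw [Set.mem_iUnion] at hmem
    obtain ⟨⟨j, hj⟩, haj⟩ := hmem
    exact Set.disjoint_left.mp (hdisj i j (Ne.symm hj)) ha haj
end

section
/- Let Δ be a simplicial complex with Stanley-Reisner ideal I ⊂ S. The map sending a partition P: Δ = ⋃_{i=1}^r [F_i, G_i] to the decomposition D(P) = ⊕_{i=1}^r x_{F_i} K[Z_{G_i}] establishes a bijection between partitions of Δ into intervals and squarefree Stanley decompositions of S/I. -/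
lemma sqInd_apply_mem {n : ℕ} {F : Finset (Fin n)} {i : Fin n} (h : i ∈ F) :
    sqInd F i = 1 := Finsupp.indicator_of_mem h _
lemma sqInd_apply_notMem {n : ℕ} {F : Finset (Fin n)} {i : Fin n} (h : i ∉ F) :
    sqInd F i = 0 := Finsupp.indicator_of_notMem h _

lemma support_sqInd {n : ℕ} (F : Finset (Fin n)) : (sqInd F).support = F := by
  ext i
  simp only [Finsupp.mem_support_iff]
  by_cases h : i ∈ F
  · simp [sqInd_apply_mem h, h]
  · simp [sqInd_apply_notMem h, h]

lemma mem_stanleySet_iff {n : ℕ} {F G : Finset (Fin n)} (hFG : F ⊆ G)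
    {a : Fin n →₀ ℕ} :
    a ∈ stanleySet (sqInd F) G ↔ F ⊆ a.support ∧ a.support ⊆ G := by
  constructor
  · rintro ⟨v, hv, rfl⟩
    constructor
    · intro i hi
      simp [Finsupp.mem_support_iff, sqInd_apply_mem hi]
    · intro i hi
      rw [Finsupp.mem_support_iff] at hi
      simp only [Finsupp.add_apply] at hi
      by_cases hF : i ∈ F
      · exact hFG hF
      · have : v i ≠ 0 := by simpa [sqInd_apply_notMem hF] using hi
        exact hv (Finsupp.mem_support_iff.mpr this)
  · rintro ⟨h1, h2⟩
    refine ⟨a - sqInd F, ?_, ?_⟩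
    · exact subset_trans (by exact_mod_cast Finsupp.support_tsub) (by exact_mod_cast h2)
    · have hle : sqInd F ≤ a := by
        intro i
        by_cases hF : i ∈ F
        · have := h1 hF
          rw [Finsupp.mem_support_iff] at this
          simp [sqInd_apply_mem hF]; omega
        · simp [sqInd_apply_notMem hF]
      exact (add_tsub_cancel_of_le hle).symm

/-- `P` (a finite set of pairs `(F,G)`) is a partition of the simplicial complex `Δ`
into intervals `[F,G]`. -/
def IsIntervalPartition {n : ℕ} (Δ : Set (Finset (Fin n)))
    (P : Finset (Finset (Fin n) × Finset (Fin n))) : Prop :=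
  (∀ p ∈ P, p.1 ⊆ p.2 ∧ p.2 ∈ Δ) ∧
    ∀ H : Finset (Fin n), H ∈ Δ ↔ ∃! p, p ∈ P ∧ p.1 ⊆ H ∧ H ⊆ p.2

/-- `P` (a finite set of pairs `(F,G)`) is a squarefree Stanley decomposition of
`S/I`: the squarefree Stanley spaces `x_F K[Z_G]`, `(F,G) ∈ P`, are pairwise disjoint
and their monomials are exactly the monomials outside the monomial set `M` of `I`. -/
def IsSqStanleyDecomp {n : ℕ} (M : Set (Fin n →₀ ℕ))
    (P : Finset (Finset (Fin n) × Finset (Fin n))) : Prop :=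
  (∀ p ∈ P, p.1 ⊆ p.2) ∧
    (∀ p ∈ P, ∀ q ∈ P, p ≠ q →
      Disjoint (stanleySet (sqInd p.1) p.2) (stanleySet (sqInd q.1) q.2)) ∧
    (⋃ p ∈ (P : Set (Finset (Fin n) × Finset (Fin n))), stanleySet (sqInd p.1) p.2) = Mᶜ


/-- the assignment `P ↦ D(P) = ⊕_{(F,G) ∈ P} x_F K[Z_G]` is a bijection
between interval partitions of `Δ` and squarefree Stanley decompositions of `S/I_Δ`
(decompositions and partitions being recorded by their sets of interval pairs, which
determine the Stanley spaces uniquely). -/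
theorem partitions_equiv_squarefree_stanley_decompositions
    {n : ℕ} (Δ : Set (Finset (Fin n)))
    (hΔ : ∀ F ∈ Δ, ∀ G : Finset (Fin n), G ⊆ F → G ∈ Δ)
    (P : Finset (Finset (Fin n) × Finset (Fin n))) :
    IsIntervalPartition Δ P ↔ IsSqStanleyDecomp {a | a.support ∉ Δ} P := by
  constructor
  · rintro ⟨hpairs, hpart⟩
    refine ⟨fun p hp => (hpairs p hp).1, ?_, ?_⟩
    · intro p hp q hq hpq
      rw [Set.disjoint_left]
      intro a hap haq
      rw [mem_stanleySet_iff (hpairs p hp).1] at hap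
      rw [mem_stanleySet_iff (hpairs q hq).1] at haq
      have hmem : a.support ∈ Δ := hΔ p.2 (hpairs p hp).2 _ hap.2
      obtain ⟨r, -, hr⟩ := (hpart a.support).mp hmem
      exact hpq ((hr p ⟨hp, hap⟩).trans (hr q ⟨hq, haq⟩).symm)
    · ext a
      simp only [Set.mem_iUnion, Set.mem_compl_iff, Set.mem_setOf_eq, not_not]
      constructor
      · rintro ⟨p, hp, hap⟩
        rw [mem_stanleySet_iff (hpairs p hp).1] at hap
        exact hΔ p.2 (hpairs p hp).2 _ hap.2
      · intro h
        obtain ⟨p, ⟨hp, h1, h2⟩, -⟩ := (hpart a.support).mp h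
        exact ⟨p, hp, (mem_stanleySet_iff (hpairs p hp).1).mpr ⟨h1, h2⟩⟩
  · rintro ⟨hsub, hdisj, hcov⟩
    have key : ∀ H : Finset (Fin n),
        sqInd H ∈ (⋃ p ∈ (P : Set (Finset (Fin n) × Finset (Fin n))),
          stanleySet (sqInd p.1) p.2) ↔ H ∈ Δ := by
      intro H
      rw [hcov]
      simp [support_sqInd]
    have hΔ2 : ∀ p ∈ P, p.2 ∈ Δ := by
      intro p hp
      rw [← key]
      exact Set.mem_biUnion hp ((mem_stanleySet_iff (hsub p hp)).mpr
        ⟨by rw [support_sqInd]; exact hsub p hp, by rw [support_sqInd]⟩)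
    refine ⟨fun p hp => ⟨hsub p hp, hΔ2 p hp⟩, fun H => ?_⟩
    constructor
    · intro hH
      obtain ⟨p, hp, hap⟩ := Set.mem_iUnion₂.mp ((key H).mpr hH)
      rw [mem_stanleySet_iff (hsub p hp), support_sqInd] at hap
      refine ⟨p, ⟨hp, hap.1, hap.2⟩, ?_⟩
      rintro q ⟨hq, hq1, hq2⟩
      by_contra hne
      exact Set.disjoint_left.mp (hdisj q hq p hp hne)
        ((mem_stanleySet_iff (hsub q hq)).mpr (by rw [support_sqInd]; exact ⟨hq1, hq2⟩))
        ((mem_stanleySet_iff (hsub p hp)).mpr (by rw [support_sqInd]; exact hap))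
    · rintro ⟨p, ⟨hp, h1, h2⟩, -⟩
      exact hΔ p.2 (hΔ2 p hp) H h2
end
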